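/- Let (Ω, Σ) and (Ω', Σ') be measurable spaces, H a separable complex Hilbert space, and let M₁ ∈ O_Σ(H) and M₂ ∈ O_{Σ'}(H) be jointly measurable observables. If M₁ is extremal in O_Σ(H) and M₂ is extremal in O_{Σ'}(H), then their unique joint observable M ∈ O_{Σ⊗Σ'}(H) is extremal in O_{Σ⊗Σ'}(H). -/

import Mathlib

/-! If `M = t N₁ + (1 - t) N₂` on the product, the marginals of `N₁` and `N₂` are convex
decompositions of the extremal `M₁` and `M₂`, so `N₁` and `N₂` are joint observables of `M₁` and
`M₂`. It therefore suffices to show that extremality of `M₁` alone forces two joint observables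
`N`, `N'` with the same marginals to coincide, which is also the uniqueness claim.
For measurable `Y`, the set functions `X ↦ N (X × Y) + N' (X × Yᶜ)` and
`X ↦ N' (X × Y) + N (X × Yᶜ)` are POVMs with average `M₁`, hence equal; together with
`N (X × Y) + N (X × Yᶜ) = M₁ X = N' (X × Y) + N' (X × Yᶜ)` this gives `N (X × Y) = N' (X × Y)`.
Agreement on rectangles extends to the product σ-algebra through the finite measures
`Z ↦ ⟪x, N Z x⟫`, which determine the self-adjoint operators `N Z`. -/

open scoped ComplexOrder ComplexInnerProductSpace Topology

noncomputable section

/-- A normalized positive operator valued measure (POVM, observable) on the measurable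
space `Ω` with values in `L(H)`: positive operator values, `M univ = 1`, and σ-additivity
in the weak operator topology. -/
def IsPOVM {Ω : Type*} [MeasurableSpace Ω] {H : Type*}
    [NormedAddCommGroup H] [InnerProductSpace ℂ H] [CompleteSpace H]
    (M : Set Ω → H →L[ℂ] H) : Prop :=
  (∀ X : Set Ω, MeasurableSet X → (M X).IsPositive) ∧
  M Set.univ = 1 ∧
  ∀ f : ℕ → Set Ω, (∀ n, MeasurableSet (f n)) → Pairwise (Function.onFun Disjoint f) →
    ∀ x y : H, HasSum (fun n => ⟪x, M (f n) y⟫) ⟪x, M (⋃ n, f n) y⟫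

/-- A POVM is extremal in the convex set of all POVMs on the same σ-algebra. -/
def IsExtremalPOVM {Ω : Type*} [MeasurableSpace Ω] {H : Type*}
    [NormedAddCommGroup H] [InnerProductSpace ℂ H] [CompleteSpace H]
    (M : Set Ω → H →L[ℂ] H) : Prop :=
  IsPOVM M ∧ ∀ M₁ M₂ : Set Ω → H →L[ℂ] H, IsPOVM M₁ → IsPOVM M₂ →
    ∀ t : ℝ, 0 < t → t < 1 →
    (∀ X : Set Ω, MeasurableSet X → M X = (t : ℂ) • M₁ X + ((1 - t : ℝ) : ℂ) • M₂ X) →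
    ∀ X : Set Ω, MeasurableSet X → M₁ X = M₂ X

open MeasureTheory Set

lemma ContinuousLinearMap.IsPositive.eq_of_re_inner_self_eq {H : Type*} [NormedAddCommGroup H]
    [InnerProductSpace ℂ H] {A B : H →L[ℂ] H}
    (hA : A.IsPositive) (hB : B.IsPositive) (h : ∀ x, (⟪x, A x⟫).re = (⟪x, B x⟫).re) :
    A = B := by
  refine ContinuousLinearMap.coe_injective ((ext_inner_map _ _).1 fun x => ?_)
  have hx : RCLike.re ⟪A x, x⟫ = RCLike.re ⟪B x, x⟫ := by
    rw [inner_re_symm (A x), inner_re_symm (B x)]; exact h x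
  rw [← hA.isSymmetric.coe_re_inner_apply_self, ← hB.isSymmetric.coe_re_inner_apply_self]
  exact congrArg _ hx

section

variable {α β : Type*} [MeasurableSpace α] [MeasurableSpace β]
  {H : Type*} [NormedAddCommGroup H] [InnerProductSpace ℂ H] [CompleteSpace H]
  {M N : Set α → H →L[ℂ] H}

lemma IsPOVM.map_empty (hM : IsPOVM M) : M ∅ = 0 := by
  ext y
  refine ext_inner_left ℂ fun x => ?_
  have h := hM.2.2 (fun _ => ∅) (fun _ => .empty) (fun _ _ _ => disjoint_bot_left) x y
  simpa using (summable_const_iff _).1 h.summable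

lemma IsPOVM.map_union (hM : IsPOVM M) {A B : Set α} (hA : MeasurableSet A)
    (hB : MeasurableSet B) (hAB : Disjoint A B) : M (A ∪ B) = M A + M B := by
  set f : ℕ → Set α := fun n => if n = 0 then A else if n = 1 then B else ∅
  have hf : ∀ n, MeasurableSet (f n) := by
    intro n; dsimp only [f]; split_ifs <;> simp [hA, hB]
  have hfd : Pairwise (Function.onFun Disjoint f) := by
    intro i j hij; dsimp only [f, Function.onFun]; split_ifs <;> simp_all [hAB.symm]
  have hU : ⋃ n, f n = A ∪ B := by
    ext z
    simp only [f, mem_iUnion, mem_union]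
    constructor
    · rintro ⟨n, hn⟩
      split_ifs at hn <;> simp_all
    · rintro (h | h)
      exacts [⟨0, by simpa⟩, ⟨1, by simpa⟩]
  ext y
  refine ext_inner_left ℂ fun x => ?_
  have hsum : HasSum (fun n => ⟪x, M (f n) y⟫) (⟪x, M A y⟫ + ⟪x, M B y⟫) := by
    convert hasSum_sum_of_ne_finset_zero (s := Finset.range 2)
      (L := SummationFilter.unconditional ℕ) _ using 1
    · simp [f, Finset.sum_range_succ]
    · intro n hn
      simp only [Finset.mem_range] at hn
      simp [f, show n ≠ 0 by omega, show n ≠ 1 by omega, hM.map_empty]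
  simpa [hU, inner_add_right] using (hM.2.2 f hf hfd x y).unique hsum

lemma IsPOVM.map_inter_add_map_inter_compl (hM : IsPOVM M) {s S : Set α} (hs : MeasurableSet s)
    (hS : MeasurableSet S) : M (s ∩ S) + M (s ∩ Sᶜ) = M s := by
  rw [← hM.map_union (hs.inter hS) (hs.inter hS.compl)
    (disjoint_compl_right.mono inter_subset_right inter_subset_right), inter_union_compl]

def IsPOVM.toMeasure (hM : IsPOVM M) (x : H) : Measure α :=
  Measure.ofMeasurable (fun s _ => ENNReal.ofReal (⟪x, M s x⟫).re) (by simp [hM.map_empty])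
    fun f hf hfd => by
      have h := Complex.hasSum_re (hM.2.2 f hf hfd x x)
      rw [← h.tsum_eq]
      exact ENNReal.ofReal_tsum_of_nonneg
        (fun n => (hM.1 _ (hf n)).re_inner_nonneg_right x) h.summable

lemma IsPOVM.toMeasure_apply (hM : IsPOVM M) (x : H) {s : Set α} (hs : MeasurableSet s) :
    hM.toMeasure x s = ENNReal.ofReal (⟪x, M s x⟫).re :=
  Measure.ofMeasurable_apply s hs

instance IsPOVM.isFiniteMeasure_toMeasure (hM : IsPOVM M) (x : H) :
    IsFiniteMeasure (hM.toMeasure x) :=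
  ⟨by simp [hM.toMeasure_apply x .univ]⟩

lemma IsPOVM.ext_of_generateFrom (hM : IsPOVM M) (hN : IsPOVM N) {C : Set (Set α)}
    (hgen : ‹MeasurableSpace α› = MeasurableSpace.generateFrom C) (hC : IsPiSystem C)
    (hMN : ∀ s ∈ C, M s = N s) {s : Set α} (hs : MeasurableSet s) : M s = N s := by
  have hmeas : ∀ x, hM.toMeasure x = hN.toMeasure x := fun x =>
    ext_of_generate_finite C hgen hC
      (fun t ht => by
        have ht' : MeasurableSet t := hgen ▸ MeasurableSpace.measurableSet_generateFrom ht
        rw [hM.toMeasure_apply x ht', hN.toMeasure_apply x ht', hMN t ht])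
      (by rw [hM.toMeasure_apply x .univ, hN.toMeasure_apply x .univ, hM.2.1, hN.2.1])
  refine (hM.1 s hs).eq_of_re_inner_self_eq (hN.1 s hs) fun x => ?_
  have h := congrArg (· s) (hmeas x)
  simp only [hM.toMeasure_apply x hs, hN.toMeasure_apply x hs] at h
  exact (ENNReal.ofReal_eq_ofReal_iff ((hM.1 s hs).re_inner_nonneg_right x)
    ((hN.1 s hs).re_inner_nonneg_right x)).1 h

lemma IsPOVM.map (hM : IsPOVM M) {f : α → β} (hf : Measurable f) :
    IsPOVM fun s => M (f ⁻¹' s) :=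
  ⟨fun _ hs => hM.1 _ (hf hs), by simpa using hM.2.1, fun g hg hgd x y => by
    simpa only [preimage_iUnion] using
      hM.2.2 _ (fun n => hf (hg n)) (fun i j hij => (hgd hij).preimage f) x y⟩

lemma IsPOVM.restrict_add_restrict_compl (hM : IsPOVM M) (hN : IsPOVM N) {S : Set α}
    (hS : MeasurableSet S) (hMN : M S = N S) : IsPOVM fun s => M (s ∩ S) + N (s ∩ Sᶜ) := by
  refine ⟨fun s hs => (hM.1 _ (hs.inter hS)).add (hN.1 _ (hs.inter hS.compl)), ?_,
    fun f hf hfd x y => ?_⟩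
  · simpa [hMN, hN.2.1] using hN.map_inter_add_map_inter_compl .univ hS
  · have hMS := hM.2.2 (fun n => f n ∩ S) (fun n => (hf n).inter hS)
      (fun i j hij => (hfd hij).mono inter_subset_left inter_subset_left) x y
    have hNS := hN.2.2 (fun n => f n ∩ Sᶜ) (fun n => (hf n).inter hS.compl)
      (fun i j hij => (hfd hij).mono inter_subset_left inter_subset_left) x y
    simpa only [iUnion_inter, add_apply, inner_add_right] using hMS.add hNS

lemma IsExtremalPOVM.eq_of_add_eq_two_smul (hM : IsExtremalPOVM M) {A B : Set α → H →L[ℂ] H}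
    (hA : IsPOVM A) (hB : IsPOVM B) (hAB : ∀ s, MeasurableSet s → A s + B s = (2 : ℂ) • M s)
    {s : Set α} (hs : MeasurableSet s) : A s = B s :=
  hM.2 A B hA hB (1 / 2) (by norm_num) (by norm_num) (fun t ht => by
    rw [show ((1 - 1 / 2 : ℝ) : ℂ) = ((1 / 2 : ℝ) : ℂ) by norm_num, ← smul_add, hAB t ht,
      smul_smul]
    norm_num) s hs

lemma IsExtremalPOVM.eq_of_eq_convex_combination (hM : IsExtremalPOVM M)
    {A B : Set α → H →L[ℂ] H} (hA : IsPOVM A) (hB : IsPOVM B) {t : ℝ} (ht₀ : 0 < t) (ht₁ : t < 1)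
    (hAB : ∀ s, MeasurableSet s → M s = (t : ℂ) • A s + ((1 - t : ℝ) : ℂ) • B s)
    (s : Set α) (hs : MeasurableSet s) : A s = M s ∧ B s = M s := by
  have hBA := hM.2 A B hA hB t ht₀ ht₁ hAB s hs
  have hMA : M s = A s := by
    rw [hAB s hs, ← hBA, ← add_smul, ← Complex.ofReal_add, add_sub_cancel, Complex.ofReal_one,
      one_smul]
  exact ⟨hMA.symm, hBA ▸ hMA.symm⟩

theorem IsExtremalPOVM.map_preimage_inter_eq {P : Set β → H →L[ℂ] H} (hP : IsExtremalPOVM P)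
    (hM : IsPOVM M) (hN : IsPOVM N) {f : α → β} (hf : Measurable f)
    (hMP : ∀ X, MeasurableSet X → M (f ⁻¹' X) = P X)
    (hNP : ∀ X, MeasurableSet X → N (f ⁻¹' X) = P X)
    {S : Set α} (hS : MeasurableSet S) (hMN : M S = N S) {X : Set β} (hX : MeasurableSet X) :
    M (f ⁻¹' X ∩ S) = N (f ⁻¹' X ∩ S) := by
  have hswap := hP.eq_of_add_eq_two_smul
    ((hM.restrict_add_restrict_compl hN hS hMN).map hf)
    ((hN.restrict_add_restrict_compl hM hS hMN.symm).map hf) (fun Y hY => by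
      rw [two_smul]
      nth_rw 1 [← hMP Y hY]
      rw [← hNP Y hY, ← hM.map_inter_add_map_inter_compl (hf hY) hS,
        ← hN.map_inter_add_map_inter_compl (hf hY) hS]
      abel) hX
  have hsplit : M (f ⁻¹' X ∩ S) + M (f ⁻¹' X ∩ Sᶜ) = N (f ⁻¹' X ∩ S) + N (f ⁻¹' X ∩ Sᶜ) := by
    rw [hM.map_inter_add_map_inter_compl (hf hX) hS, hN.map_inter_add_map_inter_compl (hf hX) hS,
      hMP X hX, hNP X hX]
  linear_combination (norm := module) (1 / 2 : ℂ) • (hswap + hsplit)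

lemma IsPOVM.fst_marginal {N : Set (α × β) → H →L[ℂ] H} (hN : IsPOVM N) :
    IsPOVM fun X : Set α => N (X ×ˢ univ) := by
  simpa only [prod_univ] using hN.map measurable_fst

lemma IsPOVM.snd_marginal {N : Set (α × β) → H →L[ℂ] H} (hN : IsPOVM N) :
    IsPOVM fun Y : Set β => N (univ ×ˢ Y) := by
  simpa only [univ_prod] using hN.map measurable_snd

theorem IsExtremalPOVM.eq_of_marginals_eq {P : Set α → H →L[ℂ] H} (hP : IsExtremalPOVM P)
    {N N' : Set (α × β) → H →L[ℂ] H} (hN : IsPOVM N) (hN' : IsPOVM N')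
    (hNP : ∀ X, MeasurableSet X → N (X ×ˢ univ) = P X)
    (hN'P : ∀ X, MeasurableSet X → N' (X ×ˢ univ) = P X)
    (hNN' : ∀ Y, MeasurableSet Y → N (univ ×ˢ Y) = N' (univ ×ˢ Y))
    {Z : Set (α × β)} (hZ : MeasurableSet Z) : N Z = N' Z := by
  refine hN.ext_of_generateFrom hN' generateFrom_prod.symm isPiSystem_prod ?_ hZ
  rintro _ ⟨X, hX, Y, hY, rfl⟩
  simp only [prod_eq]
  refine hP.map_preimage_inter_eq hN hN' measurable_fst (fun X hX => ?_) (fun X hX => ?_)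
    (measurable_snd hY) ?_ hX
  · rw [← prod_univ, hNP X hX]
  · rw [← prod_univ, hN'P X hX]
  · rw [← univ_prod, hNN' Y hY]

end

theorem joint_observable_extremal_of_extremal_marginals_general
    {Ω Ω' : Type*} [MeasurableSpace Ω] [MeasurableSpace Ω']
    {H : Type*} [NormedAddCommGroup H] [InnerProductSpace ℂ H] [CompleteSpace H]
    (M₁ : Set Ω → H →L[ℂ] H) (M₂ : Set Ω' → H →L[ℂ] H)
    (M : Set (Ω × Ω') → H →L[ℂ] H) (hM : IsPOVM M)
    (hmarg₁ : ∀ X : Set Ω, MeasurableSet X → M (X ×ˢ (Set.univ : Set Ω')) = M₁ X)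
    (hmarg₂ : ∀ Y : Set Ω', MeasurableSet Y → M ((Set.univ : Set Ω) ×ˢ Y) = M₂ Y)
    (hext₁ : IsExtremalPOVM M₁) (hext₂ : IsExtremalPOVM M₂) :
    (∀ M' : Set (Ω × Ω') → H →L[ℂ] H, IsPOVM M' →
      (∀ X : Set Ω, MeasurableSet X → M' (X ×ˢ (Set.univ : Set Ω')) = M₁ X) →
      (∀ Y : Set Ω', MeasurableSet Y → M' ((Set.univ : Set Ω) ×ˢ Y) = M₂ Y) →
      ∀ Z : Set (Ω × Ω'), MeasurableSet Z → M' Z = M Z) ∧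
    IsExtremalPOVM M := by
  refine ⟨fun M' hM' hmarg₁' hmarg₂' Z hZ => hext₁.eq_of_marginals_eq hM' hM hmarg₁' hmarg₁
    (fun Y hY => by rw [hmarg₂' Y hY, hmarg₂ Y hY]) hZ, hM,
    fun N₁ N₂ hN₁ hN₂ t ht₀ ht₁ hN Z hZ => ?_⟩
  have hfst := hext₁.eq_of_eq_convex_combination hN₁.fst_marginal hN₂.fst_marginal ht₀ ht₁
    fun X hX => by simpa only [hmarg₁ X hX] using hN _ (hX.prod .univ)
  have hsnd := hext₂.eq_of_eq_convex_combination hN₁.snd_marginal hN₂.snd_marginal ht₀ ht₁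
    fun Y hY => by simpa only [hmarg₂ Y hY] using hN _ (MeasurableSet.univ.prod hY)
  exact hext₁.eq_of_marginals_eq hN₁ hN₂ (fun X hX => (hfst X hX).1) (fun X hX => (hfst X hX).2)
    (fun Y hY => (hsnd Y hY).1.trans (hsnd Y hY).2.symm) hZ

/-- **Extremality of the joint observable** (item (e) of the paper). Let `M₁` and `M₂` be
jointly measurable POVMs on `(Ω, Σ)` and `(Ω', Σ')` with values in `L(H)`, `H` separable,
with joint observable `M` on the product σ-algebra. If both `M₁` and `M₂` are extremal,
then the joint observable is unique and extremal in the convex set of POVMs on the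
product σ-algebra. -/
theorem joint_observable_extremal_of_extremal_marginals
    {Ω Ω' : Type*} [MeasurableSpace Ω] [MeasurableSpace Ω']
    {H : Type*} [NormedAddCommGroup H] [InnerProductSpace ℂ H] [CompleteSpace H]
    [TopologicalSpace.SeparableSpace H]
    (M₁ : Set Ω → H →L[ℂ] H) (M₂ : Set Ω' → H →L[ℂ] H)
    (hM₁ : IsPOVM M₁) (hM₂ : IsPOVM M₂)
    (M : Set (Ω × Ω') → H →L[ℂ] H) (hM : IsPOVM M)
    (hmarg₁ : ∀ X : Set Ω, MeasurableSet X → M (X ×ˢ (Set.univ : Set Ω')) = M₁ X)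
    (hmarg₂ : ∀ Y : Set Ω', MeasurableSet Y → M ((Set.univ : Set Ω) ×ˢ Y) = M₂ Y)
    (hext₁ : IsExtremalPOVM M₁) (hext₂ : IsExtremalPOVM M₂) :
    (∀ M' : Set (Ω × Ω') → H →L[ℂ] H, IsPOVM M' →
      (∀ X : Set Ω, MeasurableSet X → M' (X ×ˢ (Set.univ : Set Ω')) = M₁ X) →
      (∀ Y : Set Ω', MeasurableSet Y → M' ((Set.univ : Set Ω) ×ˢ Y) = M₂ Y) →
      ∀ Z : Set (Ω × Ω'), MeasurableSet Z → M' Z = M Z) ∧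
    IsExtremalPOVM M :=
  joint_observable_extremal_of_extremal_marginals_general M₁ M₂ M hM hmarg₁ hmarg₂ hext₁ hext₂
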